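/- Two smooth strictly proper scoring rules R and R' on binary outcomes are equivalent (related by a positive affine transformation R'(y,x) = αR(y,x) + β(x) with α > 0) if and only if for all y_1, y_2, θ in [0,1]: R'(y_1,θ) > R'(y_2,θ) ⟺ R(y_1,θ) > R(y_2,θ), where R(y,θ) = θR(y,1)+(1-θ)R(y,0) is the expected score. -/

import Mathlib

/-!
A strictly proper rule rewards a higher report more when the outcome is `true` and less when it is
`false`, so for reports `b < a` the score difference `θ ↦ expScore R a θ - expScore R b θ` is an
increasing affine function of `θ` with a root in `[0, 1]`. A second rule inducing the same
ranking has a tie at that root too, so its difference vector `(Δtrue, Δfalse)` is a positive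
multiple of that of `R`. Splitting `[0, 1]` at any interior report `y` into two pairs whose
difference vectors are linearly independent forces all these multiples to be equal.
-/

/-- Expected score of report `y` under `X ~ Bernoulli(θ)`. -/
noncomputable def expScore (R : ℝ → Bool → ℝ) (y θ : ℝ) : ℝ :=
  θ * R y true + (1 - θ) * R y false

open Set

def IsStrictlyProper (S : ℝ → Bool → ℝ) : Prop :=
  ∀ p ∈ Icc (0:ℝ) 1, ∀ y ∈ Icc (0:ℝ) 1, y ≠ p → expScore S p p > expScore S y p

def SameRanking (S S' : ℝ → Bool → ℝ) : Prop :=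
  ∀ y₁ ∈ Icc (0:ℝ) 1, ∀ y₂ ∈ Icc (0:ℝ) 1, ∀ θ ∈ Icc (0:ℝ) 1,
    (expScore S' y₁ θ > expScore S' y₂ θ ↔ expScore S y₁ θ > expScore S y₂ θ)

theorem expScore_sub_expScore (S : ℝ → Bool → ℝ) (a b θ : ℝ) :
    expScore S a θ - expScore S b θ =
      θ * (S a true - S b true) + (1 - θ) * (S a false - S b false) := by
  unfold expScore; ring

theorem sameRanking_of_affine {S S' : ℝ → Bool → ℝ} {α : ℝ} (hα : 0 < α) (β : Bool → ℝ)
    (h : ∀ y ∈ Icc (0:ℝ) 1, ∀ x, S' y x = α * S y x + β x) : SameRanking S S' := by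
  intro y₁ hy₁ y₂ hy₂ θ _
  have hsub : expScore S' y₁ θ - expScore S' y₂ θ = α * (expScore S y₁ θ - expScore S y₂ θ) := by
    simp only [expScore, h y₁ hy₁, h y₂ hy₂]; ring
  rw [gt_iff_lt, gt_iff_lt, ← sub_pos, hsub, mul_pos_iff_of_pos_left hα, sub_pos]

/-- Cross-product form of: if `u' ∥ u`, `w' ∥ w` and `u' + w' ∥ u + w` for independent `u, w`,
then `u'` and `w'` are the same multiple of `u` and `w`; here `u = (t₁, f₁)`, `w = (t₂, f₂)`. -/
theorem mul_eq_mul_of_parallel_add {K : Type*} [CommRing K] [NoZeroDivisors K]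
    {t₁ f₁ t₂ f₂ t₁' f₁' t₂' f₂' : K} (h₁ : t₁' * f₁ = t₁ * f₁') (h₂ : t₂' * f₂ = t₂ * f₂')
    (h : (t₁' + t₂') * (f₁ + f₂) = (t₁ + t₂) * (f₁' + f₂')) (hind : t₂ * f₁ ≠ t₁ * f₂) :
    t₁' * t₂ = t₁ * t₂' := by
  have key : (t₂ * f₁ - t₁ * f₂) * (t₁' * t₂ - t₁ * t₂') = 0 := by
    linear_combination (t₁ * t₂ + t₂ ^ 2) * h₁ + (t₁ * t₂ + t₁ ^ 2) * h₂ - t₁ * t₂ * h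
  exact sub_eq_zero.1 ((mul_eq_zero.1 key).resolve_left (sub_ne_zero.2 hind))

namespace IsStrictlyProper

variable {S : ℝ → Bool → ℝ}

theorem score_lt_score (hS : IsStrictlyProper S) {a b : ℝ} (ha : a ∈ Icc (0:ℝ) 1)
    (hb : b ∈ Icc (0:ℝ) 1) (hba : b < a) :
    S b true < S a true ∧ S a false < S b false := by
  have h₁ := hS a ha b hb hba.ne
  have h₂ := hS b hb a ha hba.ne'
  rw [gt_iff_lt, ← sub_pos, expScore_sub_expScore] at h₁ h₂
  constructor <;> nlinarith [ha.2, hb.1]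

theorem strictMonoOn_true (hS : IsStrictlyProper S) : StrictMonoOn (fun y => S y true) (Icc 0 1) :=
  fun _ hb _ ha hba => (hS.score_lt_score ha hb hba).1

theorem cross_lt_cross (hS : IsStrictlyProper S) {a b y : ℝ} (ha : a ∈ Icc (0:ℝ) 1)
    (hb : b ∈ Icc (0:ℝ) 1) (hby : b < y) (hya : y < a) :
    (S y true - S b true) * (S a false - S y false) <
      (S a true - S y true) * (S y false - S b false) := by
  have hy : y ∈ Icc (0:ℝ) 1 := ⟨hb.1.trans hby.le, hya.le.trans ha.2⟩
  have hyb := hS.score_lt_score hy hb hby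
  have hay := hS.score_lt_score ha hy hya
  have h₁ := hS y hy a ha hya.ne'
  have h₂ := hS y hy b hb hby.ne
  rw [gt_iff_lt, ← sub_pos, expScore_sub_expScore] at h₁ h₂
  nlinarith [mul_pos (sub_pos.2 hby) (sub_pos.2 hya)]

end IsStrictlyProper

namespace SameRanking

variable {S S' : ℝ → Bool → ℝ}

theorem isStrictlyProper (h : SameRanking S S') (hS : IsStrictlyProper S) :
    IsStrictlyProper S' :=
  fun p hp y hy hyp => (h p hp y hy p hp).2 (hS p hp y hy hyp)

theorem expScore_eq (h : SameRanking S S') {a b θ : ℝ} (ha : a ∈ Icc (0:ℝ) 1)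
    (hb : b ∈ Icc (0:ℝ) 1) (hθ : θ ∈ Icc (0:ℝ) 1) (hab : expScore S a θ = expScore S b θ) :
    expScore S' a θ = expScore S' b θ := by
  by_contra hne
  rcases lt_or_gt_of_ne hne with hlt | hlt
  · exact (h b hb a ha θ hθ |>.1 hlt).ne hab
  · exact (h a ha b hb θ hθ |>.1 hlt).ne' hab

theorem cross_eq (h : SameRanking S S') (hS : IsStrictlyProper S) {a b : ℝ}
    (ha : a ∈ Icc (0:ℝ) 1) (hb : b ∈ Icc (0:ℝ) 1) (hba : b < a) :
    (S' a true - S' b true) * (S a false - S b false) =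
      (S a true - S b true) * (S' a false - S' b false) := by
  obtain ⟨ht, hf⟩ := hS.score_lt_score ha hb hba
  set t := S a true - S b true
  set f := S a false - S b false
  have hft : f - t < 0 := by linarith
  -- the indifference point of `S` between `a` and `b`
  set θ₀ := f / (f - t)
  have hθ₀f : θ₀ * (f - t) = f := div_mul_cancel₀ f hft.ne
  have hθ₀ : θ₀ ∈ Icc (0:ℝ) 1 := by
    constructor
    · exact div_nonneg_of_nonpos (by linarith) hft.le
    · rw [div_le_one_of_neg hft]; linarith
  have hS₀ : expScore S a θ₀ = expScore S b θ₀ := by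
    rw [← sub_eq_zero, expScore_sub_expScore]
    linear_combination -hθ₀f
  have hS'₀ := h.expScore_eq ha hb hθ₀ hS₀
  rw [← sub_eq_zero, expScore_sub_expScore] at hS'₀
  linear_combination (f - t) * hS'₀ - (S' a true - S' b true - S' a false + S' b false) * hθ₀f

theorem exists_affine (h : SameRanking S S') (hS : IsStrictlyProper S) :
    ∃ α : ℝ, 0 < α ∧ ∃ β : Bool → ℝ, ∀ y ∈ Icc (0:ℝ) 1, ∀ x, S' y x = α * S y x + β x := by
  have h0 : (0:ℝ) ∈ Icc (0:ℝ) 1 := left_mem_Icc.2 zero_le_one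
  have h1 : (1:ℝ) ∈ Icc (0:ℝ) 1 := right_mem_Icc.2 zero_le_one
  set α := (S' 1 true - S' 0 true) / (S 1 true - S 0 true)
  have hT₁ : 0 < S 1 true - S 0 true := sub_pos.2 (hS.strictMonoOn_true h0 h1 one_pos)
  have hα : 0 < α :=
    div_pos (sub_pos.2 ((h.isStrictlyProper hS).strictMonoOn_true h0 h1 one_pos)) hT₁
  refine ⟨α, hα, fun x => S' 0 x - α * S 0 x, fun y hy x => ?_⟩
  rcases hy.1.eq_or_lt with rfl | hy0
  · ring
  have hcross_true : (S' y true - S' 0 true) * (S 1 true - S 0 true) =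
      (S y true - S 0 true) * (S' 1 true - S' 0 true) := by
    rcases hy.2.eq_or_lt with rfl | hy1
    · ring
    · have := mul_eq_mul_of_parallel_add (h.cross_eq hS h1 hy hy1) (h.cross_eq hS hy h0 hy0)
        (by linear_combination h.cross_eq hS h1 h0 one_pos) (hS.cross_lt_cross h1 h0 hy0 hy1).ne
      linear_combination -this
  have htrue : S' y true - S' 0 true = α * (S y true - S 0 true) := by
    rw [div_mul_eq_mul_div, eq_div_iff hT₁.ne']
    linear_combination hcross_true
  have hfalse : S' y false - S' 0 false = α * (S y false - S 0 false) := by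
    have hTy : 0 < S y true - S 0 true := sub_pos.2 (hS.strictMonoOn_true h0 hy hy0)
    apply mul_left_cancel₀ hTy.ne'
    linear_combination -(h.cross_eq hS hy h0 hy0) + (S y false - S 0 false) * htrue
  cases x
  · linear_combination hfalse
  · linear_combination htrue

end SameRanking

theorem equivalent_iff_same_ranking_general (R R' : ℝ → Bool → ℝ)
    (hRproper : ∀ p ∈ Set.Icc (0:ℝ) 1, ∀ y ∈ Set.Icc (0:ℝ) 1, y ≠ p →
      expScore R p p > expScore R y p) :
    (∃ α : ℝ, 0 < α ∧ ∃ β : Bool → ℝ,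
      ∀ y ∈ Set.Icc (0:ℝ) 1, ∀ x : Bool, R' y x = α * R y x + β x) ↔
    (∀ y₁ ∈ Set.Icc (0:ℝ) 1, ∀ y₂ ∈ Set.Icc (0:ℝ) 1, ∀ θ ∈ Set.Icc (0:ℝ) 1,
      (expScore R' y₁ θ > expScore R' y₂ θ ↔ expScore R y₁ θ > expScore R y₂ θ)) :=
  ⟨fun ⟨_, hα, β, h⟩ => sameRanking_of_affine hα β h,
    fun h => SameRanking.exists_affine h hRproper⟩

/-- Two smooth strictly proper scoring rules on binary outcomes are equivalent
(related by a positive affine transformation `R' = αR + β(x)`) if and only if they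
always agree on the relative accuracy of any pair of reports. -/
theorem equivalent_iff_same_ranking (R R' : ℝ → Bool → ℝ)
    (hRsmooth : ∀ x : Bool, ContDiffOn ℝ 2 (fun y => R y x) (Set.Icc 0 1))
    (hR'smooth : ∀ x : Bool, ContDiffOn ℝ 2 (fun y => R' y x) (Set.Icc 0 1))
    (hRproper : ∀ p ∈ Set.Icc (0:ℝ) 1, ∀ y ∈ Set.Icc (0:ℝ) 1, y ≠ p →
      expScore R p p > expScore R y p)
    (hR'proper : ∀ p ∈ Set.Icc (0:ℝ) 1, ∀ y ∈ Set.Icc (0:ℝ) 1, y ≠ p →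
      expScore R' p p > expScore R' y p) :
    (∃ α : ℝ, 0 < α ∧ ∃ β : Bool → ℝ,
      ∀ y ∈ Set.Icc (0:ℝ) 1, ∀ x : Bool, R' y x = α * R y x + β x) ↔
    (∀ y₁ ∈ Set.Icc (0:ℝ) 1, ∀ y₂ ∈ Set.Icc (0:ℝ) 1, ∀ θ ∈ Set.Icc (0:ℝ) 1,
      (expScore R' y₁ θ > expScore R' y₂ θ ↔ expScore R y₁ θ > expScore R y₂ θ)) :=
  equivalent_iff_same_ranking_general R R' hRproper
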